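/- arXiv:1910.14269 — 4 statements merged into one kernel-verified Lean document; each statement's English description precedes it below -/
import Mathlib

section
/- Let ε, δ, M_c, M_ap, b be real numbers with 0 ≤ ε < 1, 0 ≤ δ < 1, M_c ≥ 0, M_ap ≥ 0, b > 0, set M* = M_c + M_ap and d₂ = 2·M* + 2·b, and suppose b > δ·d₂ + ε·M_c/(1−ε). Set x = M* + ε·M_c/(1−ε) + δ·(d₂ − b + ε·M_c/(1−ε))/(1−δ). Then for all real numbers p ≥ 0 and q ≥ 0, if x·p ≥ (d₂ − x)·q and x·q ≥ (d₂ − x)·p, then p = 0 and q = 0. -/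
/-- Instantiated conclusion of the proof of Lemma 5 (strong truthfulness of the
Minimal Refereed Mechanism): inequalities (3) and (4), with common left coefficient
`x` and right coefficient `d₂ − x`, force `Pr(C) = Pr(E) = 0`. -/
theorem mrm_crossed_probabilities_zero (ε δ Mc Map b Mstar d₂ x : ℝ)
    (hε0 : 0 ≤ ε) (hε1 : ε < 1) (hδ0 : 0 ≤ δ) (hδ1 : δ < 1)
    (hMc : 0 ≤ Mc) (hMap : 0 ≤ Map) (hb : 0 < b)
    (hM : Mstar = Mc + Map) (hd₂ : d₂ = 2 * Mstar + 2 * b)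
    (hbgt : b > δ * d₂ + ε * Mc / (1 - ε))
    (hx : x = Mstar + ε * Mc / (1 - ε) + δ * (d₂ - b + ε * Mc / (1 - ε)) / (1 - δ)) :
    ∀ p q : ℝ, 0 ≤ p → 0 ≤ q →
      x * p ≥ (d₂ - x) * q → x * q ≥ (d₂ - x) * p → p = 0 ∧ q = 0 := by
  intro p q hp hq h1 h2
  set A : ℝ := ε * Mc / (1 - ε) with hA
  have hδ' : 0 < 1 - δ := by linarith
  have hAb : A + δ * d₂ < b := by linarith
  have hxd : 2 * x < d₂ := by
    have hxeq : x = Mstar + A + δ * (d₂ - b + A) / (1 - δ) := hx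
    have key : δ * (d₂ - b + A) / (1 - δ) < b - A := by
      rw [div_lt_iff₀ hδ']
      nlinarith [mul_nonneg hδ0 hδ0]
    linarith [hxeq ▸ (by linarith : Mstar + A + δ * (d₂ - b + A) / (1 - δ) < Mstar + b)]
  have hsum : (2 * x - d₂) * (p + q) ≥ 0 := by nlinarith
  have : p + q ≤ 0 := by nlinarith
  constructor <;> linarith
end

section
/- Let β be a type and H : β → β → β. Let d : ℕ, let dir : Fin d → Bool, let u, v : Fin (d+1) → β, and let s, t : Fin d → β. Suppose both label sequences are hash-consistent along the path: for every i : Fin d, u(i) = H (s i) (u (i+1)) if dir i = true and u(i) = H (u (i+1)) (s i) if dir i = false, and likewise v(i) = H (t i) (v (i+1)) if dir i = true and v(i) = H (v (i+1)) (t i) if dir i = false. If u(0) = v(0) but u(d) ≠ v(d), then H has a collision: there exist pairs (a₁, a₂) ≠ (b₁, b₂) in β × β with H a₁ a₂ = H b₁ b₂. -/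
/-- Collision extraction along two hash-consistent root-to-leaf paths (Lemma 3 of the
Minimal Refereed Mechanism paper): if both agents' claimed values along the same
root-to-leaf path are hash-consistent (with claimed sibling values `s`, `t` and
direction bits `dir`), agree at the root but disagree at the leaf, then the hash
function `H` has a collision. -/
theorem merkle_path_collision {β : Type*} (H : β → β → β) (d : ℕ)
    (dir : Fin d → Bool) (u v : Fin (d + 1) → β) (s t : Fin d → β)
    (hu : ∀ i : Fin d,
      u i.castSucc = if dir i then H (s i) (u i.succ) else H (u i.succ) (s i))
    (hv : ∀ i : Fin d,
      v i.castSucc = if dir i then H (t i) (v i.succ) else H (v i.succ) (t i))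
    (hroot : u 0 = v 0) (hleaf : u (Fin.last d) ≠ v (Fin.last d)) :
    ∃ a₁ a₂ b₁ b₂ : β, (a₁, a₂) ≠ (b₁, b₂) ∧ H a₁ a₂ = H b₁ b₂ := by
  have key : ∃ i : Fin d, u i.castSucc = v i.castSucc ∧ u i.succ ≠ v i.succ := by
    by_contra h
    push_neg at h
    have hall : ∀ i : Fin (d + 1), u i = v i := by
      intro i
      induction i using Fin.induction with
      | zero => exact hroot
      | succ i ih => exact h i ih
    exact hleaf (hall (Fin.last d))
  obtain ⟨i, heq, hne⟩ := key
  have hu' := hu i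
  have hv' := hv i
  cases hdir : dir i with
  | true =>
    rw [hdir] at hu' hv'
    simp only [if_true] at hu' hv'
    refine ⟨s i, u i.succ, t i, v i.succ, ?_, ?_⟩
    · intro hp
      exact hne (congrArg Prod.snd hp)
    · rw [← hu', ← hv', heq]
  | false =>
    rw [hdir] at hu' hv'
    simp only [Bool.false_eq_true, if_false] at hu' hv'
    refine ⟨u i.succ, s i, v i.succ, t i, ?_, ?_⟩
    · intro hp
      exact hne (congrArg Prod.fst hp)
    · rw [← hu', ← hv', heq]
end

section
/- Let α and β be types, H : β → β → β, g : α → β, and d : ℕ. Define the Merkle root mroot_d : (Fin (2^d) → β) → β recursively by mroot_0(x) = x(0) and mroot_{d+1}(x) = H (mroot_d of the left half of x) (mroot_d of the right half of x), where the left half is i ↦ x(i) and the right half is i ↦ x(2^d + i) for i : Fin (2^d). If u, v : Fin (2^d) → α satisfy mroot_d(g ∘ u) = mroot_d(g ∘ v) and u ≠ v, then either H has a collision (there exist (a₁, a₂) ≠ (b₁, b₂) with H a₁ a₂ = H b₁ b₂) or g has a collision (there exist a ≠ a' in α with g a = g a'). -/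
/-- The Merkle root of a vector of `2^d` leaf values, built by hashing (with `H`)
the roots of the left and right halves. -/
def mroot {β : Type*} (H : β → β → β) : (d : ℕ) → (Fin (2 ^ d) → β) → β
  | 0, x => x 0
  | d + 1, x =>
      H (mroot H d (fun i => x ⟨i.val, by
            have hi := i.isLt
            have h2 : 2 ^ (d + 1) = 2 ^ d * 2 := pow_succ 2 d
            omega⟩))
        (mroot H d (fun i => x ⟨2 ^ d + i.val, by
            have hi := i.isLt
            have h2 : 2 ^ (d + 1) = 2 ^ d * 2 := pow_succ 2 d
            omega⟩))

/-- Binding property for data blocks in the Merkle tree (Lemma 3): if the leaves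
store hashes `g` of data blocks and two different block vectors lead to the same
Merkle root, then either `H` or `g` has a collision. -/
theorem merkle_root_block_binding {α β : Type*} (H : β → β → β) (g : α → β) (d : ℕ)
    (u v : Fin (2 ^ d) → α)
    (hroot : mroot H d (g ∘ u) = mroot H d (g ∘ v)) (huv : u ≠ v) :
    (∃ a₁ a₂ b₁ b₂ : β, (a₁, a₂) ≠ (b₁, b₂) ∧ H a₁ a₂ = H b₁ b₂) ∨
    (∃ a a' : α, a ≠ a' ∧ g a = g a') := by
  induction d with
  | zero =>
    right
    refine ⟨u 0, v 0, ?_, hroot⟩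
    intro h
    apply huv
    funext i
    have : i = 0 := by
      apply Fin.ext
      have := i.isLt
      omega
    rw [this, h]
  | succ d ih =>
    set uL : Fin (2 ^ d) → α := fun i => u ⟨i.val, by
      have hi := i.isLt; have h2 : 2 ^ (d + 1) = 2 ^ d * 2 := pow_succ 2 d; omega⟩ with huL
    set uR : Fin (2 ^ d) → α := fun i => u ⟨2 ^ d + i.val, by
      have hi := i.isLt; have h2 : 2 ^ (d + 1) = 2 ^ d * 2 := pow_succ 2 d; omega⟩ with huR
    set vL : Fin (2 ^ d) → α := fun i => v ⟨i.val, by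
      have hi := i.isLt; have h2 : 2 ^ (d + 1) = 2 ^ d * 2 := pow_succ 2 d; omega⟩ with hvL
    set vR : Fin (2 ^ d) → α := fun i => v ⟨2 ^ d + i.val, by
      have hi := i.isLt; have h2 : 2 ^ (d + 1) = 2 ^ d * 2 := pow_succ 2 d; omega⟩ with hvR
    have hroot' : H (mroot H d (g ∘ uL)) (mroot H d (g ∘ uR))
        = H (mroot H d (g ∘ vL)) (mroot H d (g ∘ vR)) := hroot
    by_cases hpair : (mroot H d (g ∘ uL), mroot H d (g ∘ uR))
        = (mroot H d (g ∘ vL), mroot H d (g ∘ vR))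
    · obtain ⟨hL, hR⟩ := Prod.mk.injEq .. ▸ hpair
      by_cases hLeq : uL = vL
      · have hReq : uR ≠ vR := by
          intro hReq
          apply huv
          funext i
          by_cases hi : i.val < 2 ^ d
          · have := congrFun hLeq ⟨i.val, hi⟩
            simpa [huL, hvL] using this
          · have hi2 : i.val - 2 ^ d < 2 ^ d := by
              have := i.isLt; have h2 : 2 ^ (d + 1) = 2 ^ d * 2 := pow_succ 2 d; omega
            have := congrFun hReq ⟨i.val - 2 ^ d, hi2⟩
            simp only [huR, hvR] at this
            have heq : i = ⟨2 ^ d + (i.val - 2 ^ d), by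
                have := i.isLt
                have h2 : 2 ^ (d + 1) = 2 ^ d * 2 := pow_succ 2 d
                omega⟩ := Fin.ext (by simp; omega)
            rw [heq]
            exact this
        exact ih uR vR hR hReq
      · exact ih uL vL hL hLeq
    · left
      exact ⟨_, _, _, _, hpair, hroot'⟩
end

section
/- Let β be a type, H : β → β → β, and k : ℕ. For j ≤ k define the level-j labels level_j : (Fin (2^k) → β) → (Fin (2^{k−j}) → β) by level_0(x) = x and level_{j+1}(x)(i) = H (level_j(x)(2i)) (level_j(x)(2i+1)). Let x, y : Fin (2^k) → β. If the roots differ, i.e., level_k(x)(0) ≠ level_k(y)(0), then there exists a leaf index p : Fin (2^k) such that for every j ≤ k, level_j(x)(⌊p/2^j⌋) ≠ level_j(y)(⌊p/2^j⌋). -/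
/-- The labels at height `j` of the Merkle tree over `2^k` leaves: `level H 0 _ x = x`
and `level H (j+1) _ x i = H (level H j _ x (2i)) (level H j _ x (2i+1))`. -/
def level {β : Type*} (H : β → β → β) {k : ℕ} :
    (j : ℕ) → j ≤ k → (Fin (2 ^ k) → β) → Fin (2 ^ (k - j)) → β
  | 0, _, x => fun i => x (Fin.cast (by simp) i)
  | j + 1, h, x => fun i =>
      H (level H j (Nat.le_of_succ_le h) x ⟨2 * i.val, by
            have hi := i.isLt
            have h1 : k - j = (k - (j + 1)) + 1 := by omega
            have h2 : 2 ^ (k - j) = 2 ^ (k - (j + 1)) * 2 := by rw [h1, pow_succ]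
            omega⟩)
        (level H j (Nat.le_of_succ_le h) x ⟨2 * i.val + 1, by
            have hi := i.isLt
            have h1 : k - j = (k - (j + 1)) + 1 := by omega
            have h2 : 2 ^ (k - j) = 2 ^ (k - (j + 1)) * 2 := by rw [h1, pow_succ]
            omega⟩)

private lemma level_congr {β : Type*} (H : β → β → β) {k : ℕ} (j : ℕ) (hj hj' : j ≤ k)
    (x : Fin (2 ^ k) → β) (i i' : Fin (2 ^ (k - j))) (h : i.val = i'.val) :
    level H j hj x i = level H j hj' x i' := by
  congr 1
  exact Fin.ext h

private lemma aux_div {β : Type*} (H : β → β → β) {k : ℕ} (x y : Fin (2 ^ k) → β) :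
    ∀ (j : ℕ) (hj : j ≤ k) (i : Fin (2 ^ (k - j))),
      level H j hj x i ≠ level H j hj y i →
      ∃ p : Fin (2 ^ k), p.val / 2 ^ j = i.val ∧
        ∀ (j' : ℕ) (hj' : j' ≤ j) (hh : p.val / 2 ^ j' < 2 ^ (k - j')),
          level H j' (hj'.trans hj) x ⟨p.val / 2 ^ j', hh⟩
            ≠ level H j' (hj'.trans hj) y ⟨p.val / 2 ^ j', hh⟩ := by
  intro j
  induction j with
  | zero =>
    intro hj i hne
    have hlt : i.val < 2 ^ k := by simp
    refine ⟨⟨i.val, hlt⟩, by simp, ?_⟩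
    intro j' hj' hh
    interval_cases j'
    intro h
    apply hne
    calc level H 0 hj x i
        = level H 0 (Nat.le_of_eq (by omega) |>.trans hj) x ⟨(i.val : ℕ) / 2 ^ 0, hh⟩ := by
          exact level_congr H 0 _ _ x _ _ (by simp)
      _ = level H 0 (Nat.le_of_eq (by omega) |>.trans hj) y ⟨(i.val : ℕ) / 2 ^ 0, hh⟩ := h
      _ = level H 0 hj y i := level_congr H 0 _ _ y _ _ (by simp)
  | succ j ih =>
    intro hj i hne
    have hjk : j ≤ k := Nat.le_of_succ_le hj
    -- bounds for children
    have h1 : k - j = (k - (j + 1)) + 1 := by omega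
    have h2 : 2 ^ (k - j) = 2 ^ (k - (j + 1)) * 2 := by rw [h1, pow_succ]
    have hi := i.isLt
    have hb0 : 2 * i.val < 2 ^ (k - j) := by omega
    have hb1 : 2 * i.val + 1 < 2 ^ (k - j) := by omega
    have hne' : level H j hjk x ⟨2 * i.val, hb0⟩ ≠ level H j hjk y ⟨2 * i.val, hb0⟩ ∨
        level H j hjk x ⟨2 * i.val + 1, hb1⟩ ≠ level H j hjk y ⟨2 * i.val + 1, hb1⟩ := by
      by_contra hcon
      push_neg at hcon
      apply hne
      show H _ _ = H _ _
      rw [hcon.1, hcon.2]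
    have key : ∃ c : Fin (2 ^ (k - j)), c.val / 2 = i.val ∧
        level H j hjk x c ≠ level H j hjk y c := by
      rcases hne' with h | h
      · exact ⟨⟨2 * i.val, hb0⟩, by show 2 * i.val / 2 = i.val; omega, h⟩
      · exact ⟨⟨2 * i.val + 1, hb1⟩, by show (2 * i.val + 1) / 2 = i.val; omega, h⟩
    obtain ⟨c, hc, hcne⟩ := key
    obtain ⟨p, hp, hall⟩ := ih hjk c hcne
    refine ⟨p, ?_, ?_⟩
    · rw [pow_succ, ← Nat.div_div_eq_div_mul, hp, hc]
    · intro j' hj' hh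
      rcases Nat.lt_or_ge j' (j + 1) with hlt | hge
      · exact hall j' (by omega) hh
      · have hje : j' = j + 1 := by omega
        subst hje
        intro h
        apply hne
        have hpv : p.val / 2 ^ (j + 1) = i.val := by
          rw [pow_succ, ← Nat.div_div_eq_div_mul, hp, hc]
        calc level H (j+1) hj x i
            = level H (j+1) _ x ⟨p.val / 2 ^ (j+1), hh⟩ := level_congr H _ _ _ x _ _ hpv.symm
          _ = level H (j+1) _ y ⟨p.val / 2 ^ (j+1), hh⟩ := h
          _ = level H (j+1) hj y i := level_congr H _ _ _ y _ _ hpv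

/-- Correctness of the `FirstDivergence` subroutine of the arbitration process for
consistent answers: if the two Merkle roots differ, then there is a leaf `p` such
that the two agents' derived values differ at every node on the root-to-leaf path
to `p` (the ancestor of `p` at height `j` has index `⌊p / 2^j⌋`). -/
theorem first_divergence_exists {β : Type*} (H : β → β → β) (k : ℕ)
    (x y : Fin (2 ^ k) → β)
    (hroot : level H k (le_refl k) x ⟨0, by positivity⟩
      ≠ level H k (le_refl k) y ⟨0, by positivity⟩) :
    ∃ p : Fin (2 ^ k), ∀ (j : ℕ) (hj : j ≤ k),
      level H j hj x ⟨p.val / 2 ^ j, by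
          have hp := p.isLt
          have h2 : (2 : ℕ) ^ k = 2 ^ j * 2 ^ (k - j) := by
            rw [← pow_add]; congr 1; omega
          exact Nat.div_lt_of_lt_mul (lt_of_lt_of_eq hp h2)⟩
      ≠ level H j hj y ⟨p.val / 2 ^ j, by
          have hp := p.isLt
          have h2 : (2 : ℕ) ^ k = 2 ^ j * 2 ^ (k - j) := by
            rw [← pow_add]; congr 1; omega
          exact Nat.div_lt_of_lt_mul (lt_of_lt_of_eq hp h2)⟩ := by
  obtain ⟨p, _, hall⟩ := aux_div H x y k (le_refl k) ⟨0, by positivity⟩ hroot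
  exact ⟨p, fun j hj => hall j hj _⟩
end
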